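/- arXiv:2303.00531 — 2 statements merged into one kernel-verified Lean document; each statement's English description precedes it below -/
import Mathlib

section
/- Let 0 < λ < μ, ν > 0 be real numbers. Set q(t) = (μ−λ)/(μ − λe^{(λ−μ)t}) and r = ν/λ, and for natural numbers i, j define p_{i,j}(t) = q(t)^r · Σ_{l=0}^{min(i,j)} C(i,l) · binom(r+i+j−l−1, j−l) · (μ/λ)^{i−l} · (1−q(t))^{i+j−2l} · (1 − (μ/λ + 1)(1−q(t)))^l (with the convention p_{i,−1}(t) = 0). Then for each fixed i, the family of functions t ↦ p_{i,j}(t) is differentiable on (0,∞) and satisfies the forward Kolmogorov system: d/dt p_{i,0}(t) = μ p_{i,1}(t) − ν p_{i,0}(t), and for j ≥ 1, d/dt p_{i,j}(t) = (λ(j−1) + ν) p_{i,j−1}(t) + μ(j+1) p_{i,j+1}(t) − ((λ+μ)j + ν) p_{i,j}(t); moreover p_{i,i}(0) = 1 and p_{i,j}(0) = 0 for j ≠ i. -/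
/-!
Write `c = μ/λ`, `r = ν/λ` and `x = 1 - q`. Then `p_{i,j}(t) = q^r Q_{i,j}(x)` for explicit
polynomials `Q_{i,j}`, and `q` solves the Riccati equation `q' = λ q (c(1 - q) - 1)`, so
`d/dt p_{i,j} = λ q^r (L_r Q_{i,j})(x)` with `L_r P = (cX - 1)(rP - (1 - X)P')`. The forward
system is therefore the polynomial identity
`L_r Q_{i,j} = (j - 1 + r) Q_{i,j-1} + c(j + 1) Q_{i,j+1} - ((1 + c)j + r) Q_{i,j}`.
For `i = 0` it is the recurrence `(j + 1) binom(r + j, j + 1) = (r + j) binom(r + j - 1, j)`.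
Pascal's rule gives `Q^r_{i+1,j} = A Q^{r+1}_{i,j} + B Q^{r+1}_{i,j-1}` with `A = cX` and
`B = 1 - (c+1)X`, and `L_r (A P + B R) = A L_{r+1} P + B L_{r+1} R + c(cX - 1)(R - P)`; this
carries the identity from `i` to `i + 1`.
At `t = 0` we have `q = 1`, `x = 0` and `Q_{i,j}(0) = δ_{ij}`.
-/

open Real

noncomputable def genBinom (x : ℝ) (k : ℕ) : ℝ :=
  (∏ m ∈ Finset.range k, (x - m)) / (Nat.factorial k)

noncomputable def qfun (lam mu t : ℝ) : ℝ :=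
  (mu - lam) / (mu - lam * exp ((lam - mu) * t))

/-- The claimed transition probabilities `p_{i,j}(t)` of the linear birth and death
process with immigration. -/
noncomputable def pTrans (lam mu nu : ℝ) (i j : ℕ) (t : ℝ) : ℝ :=
  qfun lam mu t ^ (nu / lam) *
    ∑ l ∈ Finset.range (min i j + 1),
      (i.choose l : ℝ) * genBinom (nu / lam + (i : ℝ) + (j : ℝ) - (l : ℝ) - 1) (j - l) *
        (mu / lam) ^ (i - l) * (1 - qfun lam mu t) ^ (i + j - 2 * l) *
        (1 - (mu / lam + 1) * (1 - qfun lam mu t)) ^ l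

open Polynomial

lemma genBinom_zero (x : ℝ) : genBinom x 0 = 1 := by
  simp [genBinom]

lemma succ_mul_genBinom_succ (x : ℝ) (k : ℕ) :
    (k + 1) * genBinom (x + 1) (k + 1) = (x + 1) * genBinom x k := by
  have hprod : ∏ m ∈ Finset.range (k + 1), (x + 1 - m) =
      (∏ m ∈ Finset.range k, (x - m)) * (x + 1) := by
    rw [Finset.prod_range_succ']
    push_cast
    congr 1
    · exact Finset.prod_congr rfl fun m _ => by ring
    · ring
  rw [genBinom, genBinom, hprod, Nat.factorial_succ, Nat.cast_mul]
  have : (k.factorial : ℝ) ≠ 0 := by positivity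
  field_simp
  push_cast
  ring

lemma succ_mul_genBinom_succ_add_sub_one (r : ℝ) (m : ℕ) :
    ((m : ℝ) + 1) * genBinom (r + (m + 1 : ℕ) - 1) (m + 1) =
      (r + m) * genBinom (r + m - 1) m := by
  rw [show r + ((m + 1 : ℕ) : ℝ) - 1 = r + m - 1 + 1 by push_cast; ring, succ_mul_genBinom_succ]
  ring

noncomputable def transTerm (c r : ℝ) (i j l : ℕ) : ℝ[X] :=
  C ((i.choose l : ℝ) * genBinom (r + i + j - l - 1) (j - l) * c ^ (i - l)) *
    X ^ (i + j - 2 * l) * (1 - C (c + 1) * X) ^ l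

/-- `Q_{i,j}` with `c = μ/λ`, `r = ν/λ`, so that `p_{i,j}(t) = q^r Q_{i,j}(1 - q)`
(`pTrans_eq_eval`). It is indexed by `ℤ` and vanishes for `j < 0`, which encodes the convention
`p_{i,-1} = 0` and makes the recursions in `i` hold uniformly in `j`. Summing up to `j` rather
than `min i j` is harmless because of the factor `i.choose l`. -/
noncomputable def transPoly (c r : ℝ) (i : ℕ) : ℤ → ℝ[X]
  | Int.ofNat j => ∑ l ∈ Finset.range (j + 1), transTerm c r i j l
  | Int.negSucc _ => 0

noncomputable def kolmogorovOp (c r : ℝ) (P : ℝ[X]) : ℝ[X] :=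
  (C c * X - 1) * (C r * P - (1 - X) * derivative P)

section Polynomials

variable (c r : ℝ)

lemma transPoly_natCast (i j : ℕ) :
    transPoly c r i j = ∑ l ∈ Finset.range (j + 1), transTerm c r i j l :=
  rfl

lemma transPoly_of_neg (i : ℕ) {j : ℤ} (hj : j < 0) : transPoly c r i j = 0 := by
  cases j with
  | ofNat n => exact absurd hj (Int.not_lt.mpr (Int.natCast_nonneg n))
  | negSucc m => rfl

lemma transTerm_of_lt {i j l : ℕ} (h : i < l) : transTerm c r i j l = 0 := by
  simp [transTerm, Nat.choose_eq_zero_of_lt h]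

lemma transTerm_succ_zero (i j : ℕ) :
    transTerm c r (i + 1) j 0 = C c * X * transTerm c (r + 1) i j 0 := by
  simp only [transTerm, Nat.choose_zero_right, Nat.sub_zero, Nat.mul_zero, pow_zero, mul_one,
    Nat.cast_one, one_mul, Nat.cast_zero, sub_zero]
  rw [show r + ((i + 1 : ℕ) : ℝ) + j - 1 = r + 1 + i + j - 1 by push_cast; ring,
    show i + 1 + j = i + j + 1 by omega, pow_succ, pow_succ]
  simp only [C_mul]
  ring

lemma transTerm_succ_succ (i : ℕ) {j l : ℕ} (hl : l ≤ j) :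
    transTerm c r (i + 1) (j + 1) (l + 1) =
      C c * X * transTerm c (r + 1) i (j + 1) (l + 1) +
        (1 - C (c + 1) * X) * transTerm c (r + 1) i j l := by
  have hjl : j + 1 - (l + 1) = j - l := by omega
  have hil : i + 1 - (l + 1) = i - l := by omega
  have hexp : i + 1 + (j + 1) - 2 * (l + 1) = i + j - 2 * l := by omega
  have harg : r + ((i + 1 : ℕ) : ℝ) + ((j + 1 : ℕ) : ℝ) - ((l + 1 : ℕ) : ℝ) - 1
      = r + 1 + i + ((j + 1 : ℕ) : ℝ) - ((l + 1 : ℕ) : ℝ) - 1 := by push_cast; ring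
  have harg' : r + 1 + (i : ℝ) + ((j + 1 : ℕ) : ℝ) - ((l + 1 : ℕ) : ℝ) - 1
      = r + 1 + i + j - l - 1 := by push_cast; ring
  -- the two halves of Pascal's rule `(i+1).choose (l+1) = i.choose l + i.choose (l+1)`
  have hchoose : C ((i.choose l : ℝ) * genBinom (r + 1 + i + j - l - 1) (j - l) * c ^ (i - l)) *
      X ^ (i + j - 2 * l) * (1 - C (c + 1) * X) ^ (l + 1) =
      (1 - C (c + 1) * X) * transTerm c (r + 1) i j l := by
    rw [transTerm, pow_succ]
    ring
  have hchoose_succ :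
      C ((i.choose (l + 1) : ℝ) * genBinom (r + 1 + i + j - l - 1) (j - l) * c ^ (i - l)) *
        X ^ (i + j - 2 * l) * (1 - C (c + 1) * X) ^ (l + 1) =
      C c * X * transTerm c (r + 1) i (j + 1) (l + 1) := by
    rcases lt_or_ge i (l + 1) with hi | hi
    · simp [transTerm, Nat.choose_eq_zero_of_lt hi]
    · rw [transTerm, harg', hjl, show i - l = i - (l + 1) + 1 by omega,
        show i + j - 2 * l = i + (j + 1) - 2 * (l + 1) + 1 by omega, pow_succ, pow_succ]
      simp only [C_mul]
      ring
  rw [← hchoose, ← hchoose_succ, transTerm, Nat.choose_succ_succ', hjl, hil, hexp, harg, harg']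
  push_cast
  simp only [C_add, C_mul]
  ring

lemma transPoly_succ_natCast (i j : ℕ) :
    transPoly c r (i + 1) (j + 1 : ℕ) =
      C c * X * transPoly c (r + 1) i (j + 1 : ℕ) +
        (1 - C (c + 1) * X) * transPoly c (r + 1) i j := by
  simp only [transPoly_natCast, Finset.mul_sum]
  rw [Finset.sum_range_succ' _ (j + 1), Finset.sum_range_succ' (fun l => C c * X * _) (j + 1),
    Finset.sum_congr rfl fun l hl =>
      transTerm_succ_succ c r i (Nat.lt_succ_iff.mp (Finset.mem_range.mp hl)),
    Finset.sum_add_distrib, transTerm_succ_zero]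
  ring

lemma transPoly_succ (i : ℕ) (j : ℤ) :
    transPoly c r (i + 1) j =
      C c * X * transPoly c (r + 1) i j + (1 - C (c + 1) * X) * transPoly c (r + 1) i (j - 1) := by
  rcases lt_trichotomy j 0 with hj | rfl | hj
  · simp [transPoly_of_neg, hj, show j - 1 < 0 by omega]
  · rw [transPoly_of_neg c (r + 1) i (by norm_num : (0 : ℤ) - 1 < 0)]
    change transPoly c r (i + 1) (0 : ℕ) = C c * X * transPoly c (r + 1) i (0 : ℕ) + _
    rw [transPoly_natCast, transPoly_natCast]
    simp [transTerm_succ_zero]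
  · obtain ⟨k, rfl⟩ : ∃ k : ℕ, j = (k + 1 : ℕ) := ⟨j.toNat - 1, by omega⟩
    rw [transPoly_succ_natCast, show ((k + 1 : ℕ) : ℤ) - 1 = k by push_cast; ring]

lemma transPoly_zero_left (j : ℕ) : transPoly c r 0 j = C (genBinom (r + j - 1) j) * X ^ j := by
  rw [transPoly_natCast, Finset.sum_eq_single 0]
  · simp [transTerm]
  · exact fun l _ hl => transTerm_of_lt c r (Nat.pos_of_ne_zero hl)
  · simp

lemma kolmogorovOp_recursion (P Q : ℝ[X]) :
    kolmogorovOp c r (C c * X * P + (1 - C (c + 1) * X) * Q) =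
      C c * X * kolmogorovOp c (r + 1) P + (1 - C (c + 1) * X) * kolmogorovOp c (r + 1) Q
        + C c * (C c * X - 1) * (Q - P) := by
  simp only [kolmogorovOp, derivative_add, derivative_mul, derivative_C, derivative_X,
    derivative_sub, derivative_one, C_add, C_1]
  ring

lemma kolmogorovOp_transPoly_zero_left (j : ℤ) :
    kolmogorovOp c r (transPoly c r 0 j) =
      C (j - 1 + r) * transPoly c r 0 (j - 1) + C (c * (j + 1)) * transPoly c r 0 (j + 1)
        - C ((1 + c) * j + r) * transPoly c r 0 j := by
  have hb := succ_mul_genBinom_succ_add_sub_one r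
  rcases lt_or_ge j 0 with hj | hj
  · have hP : ∀ k ≤ j, transPoly c r 0 k = 0 := fun k hk => transPoly_of_neg c r 0 (by omega)
    rw [hP j le_rfl, hP (j - 1) (by omega)]
    rcases lt_or_eq_of_le (show j + 1 ≤ 0 by omega) with hj₁ | hj₁
    · simp [kolmogorovOp, transPoly_of_neg c r 0 hj₁]
    · simp [kolmogorovOp, show (j : ℝ) + 1 = 0 by exact_mod_cast hj₁]
  obtain ⟨n, rfl⟩ := Int.eq_ofNat_of_zero_le hj
  rcases n with _ | k
  · have h₁ : genBinom (r + ((1 : ℕ) : ℝ) - 1) 1 = r := by simpa [genBinom_zero] using hb 0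
    rw [transPoly_of_neg c r 0 (by norm_num : ((0 : ℕ) : ℤ) - 1 < 0),
      show ((0 : ℕ) : ℤ) + 1 = (1 : ℕ) by rfl, transPoly_zero_left, transPoly_zero_left, h₁]
    simp [kolmogorovOp, genBinom_zero]
    ring
  · have e₁ := congrArg C (hb k)
    have e₂ := congrArg C (hb (k + 1))
    rw [show ((k + 1 : ℕ) : ℤ) - 1 = (k : ℕ) by push_cast; ring,
      show ((k + 1 : ℕ) : ℤ) + 1 = (k + 2 : ℕ) by push_cast; ring, transPoly_zero_left,
      transPoly_zero_left, transPoly_zero_left]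
    generalize genBinom (r + (k : ℕ) - 1) k = b₀ at e₁ ⊢
    generalize genBinom (r + (k + 1 : ℕ) - 1) (k + 1) = b₁ at e₁ e₂ ⊢
    generalize genBinom (r + (k + 2 : ℕ) - 1) (k + 2) = b₂ at e₂ ⊢
    simp only [kolmogorovOp, derivative_C_mul_X_pow, Nat.add_sub_cancel]
    simp only [pow_succ]
    push_cast at e₁ e₂ ⊢
    simp only [C_add, C_mul, C_sub, C_1] at e₁ e₂ ⊢
    linear_combination X ^ k * e₁ - (C c * X ^ k * X * X) * e₂

lemma kolmogorovOp_transPoly (i : ℕ) (j : ℤ) :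
    kolmogorovOp c r (transPoly c r i j) =
      C (j - 1 + r) * transPoly c r i (j - 1) + C (c * (j + 1)) * transPoly c r i (j + 1)
        - C ((1 + c) * j + r) * transPoly c r i j := by
  induction i generalizing r j with
  | zero => exact kolmogorovOp_transPoly_zero_left c r j
  | succ i ih =>
    have hj := ih (r + 1) j
    have hj' := ih (r + 1) (j - 1)
    rw [sub_add_cancel] at hj'
    rw [transPoly_succ c r i j, kolmogorovOp_recursion, transPoly_succ c r i (j - 1),
      transPoly_succ c r i (j + 1), add_sub_cancel_right]
    push_cast at hj hj' ⊢
    simp only [C_add, C_sub, C_mul, C_1] at hj hj' ⊢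
    linear_combination (C c * X) * hj + (1 - (C c + 1) * X) * hj'

lemma eval_zero_transPoly (i : ℕ) (j : ℤ) :
    (transPoly c r i j).eval 0 = if j = i then 1 else 0 := by
  induction i generalizing r j with
  | zero =>
    rcases lt_or_ge j 0 with hj | hj
    · simp [transPoly_of_neg c r 0 hj, hj.ne]
    · obtain ⟨n, rfl⟩ := Int.eq_ofNat_of_zero_le hj
      rw [transPoly_zero_left]
      rcases n with _ | n
      · simp [genBinom_zero]
      · simp [show (n : ℤ) + 1 ≠ 0 by omega]
  | succ i ih => simp [transPoly_succ, ih, sub_eq_iff_eq_add]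

end Polynomials

lemma pTrans_eq_eval (lam mu nu : ℝ) (i j : ℕ) (t : ℝ) :
    pTrans lam mu nu i j t =
      qfun lam mu t ^ (nu / lam) *
        (transPoly (mu / lam) (nu / lam) i j).eval (1 - qfun lam mu t) := by
  rw [pTrans, transPoly_natCast, eval_finsetSum]
  congr 1
  rw [Finset.sum_subset (Finset.range_subset_range.mpr (Nat.succ_le_succ (min_le_right i j)))]
  · refine Finset.sum_congr rfl fun l _ => ?_
    simp [transTerm]
  · intro l hlj hl
    rw [Finset.mem_range] at hlj hl
    rw [Nat.choose_eq_zero_of_lt (by omega)]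
    simp

lemma HasDerivAt.rpow_mul_eval_one_sub {f : ℝ → ℝ} {a t : ℝ} (c r : ℝ)
    (hf : HasDerivAt f (a * f t * (c * (1 - f t) - 1)) t) (hf₀ : f t ≠ 0) (P : ℝ[X]) :
    HasDerivAt (fun τ => f τ ^ r * P.eval (1 - f τ))
      (a * f t ^ r * (kolmogorovOp c r P).eval (1 - f t)) t := by
  have hP := (P.hasDerivAt (1 - f t)).comp t ((hasDerivAt_const t 1).sub hf)
  refine ((hf.rpow_const (p := r) (Or.inl hf₀)).mul hP).congr_deriv ?_
  rw [kolmogorovOp, rpow_sub_one hf₀]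
  simp only [eval_mul, eval_sub, eval_C, eval_X, eval_one, Function.comp_apply, Pi.sub_apply]
  field_simp
  ring

lemma qfun_denom_pos {lam mu t : ℝ} (hlam : 0 ≤ lam) (hlm : lam < mu) (ht : 0 ≤ t) :
    0 < mu - lam * exp ((lam - mu) * t) := by
  have : exp ((lam - mu) * t) ≤ 1 :=
    exp_le_one_iff.mpr (mul_nonpos_of_nonpos_of_nonneg (by linarith) ht)
  nlinarith

lemma qfun_pos {lam mu t : ℝ} (hlam : 0 ≤ lam) (hlm : lam < mu) (ht : 0 ≤ t) :
    0 < qfun lam mu t :=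
  div_pos (by linarith) (qfun_denom_pos hlam hlm ht)

lemma qfun_zero {lam mu : ℝ} (h : lam ≠ mu) : qfun lam mu 0 = 1 := by
  rw [qfun, mul_zero, exp_zero, mul_one, div_self (sub_ne_zero.mpr h.symm)]

lemma hasDerivAt_qfun {lam mu t : ℝ} (h : mu - lam * exp ((lam - mu) * t) ≠ 0) :
    HasDerivAt (qfun lam mu) ((mu - lam) * qfun lam mu t - mu * qfun lam mu t ^ 2) t := by
  have hexp : HasDerivAt (fun τ => exp ((lam - mu) * τ)) (exp ((lam - mu) * t) * (lam - mu)) t :=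
    ((hasDerivAt_id t).const_mul (lam - mu)).exp.congr_deriv (by simp)
  unfold qfun
  refine ((hasDerivAt_const t (mu - lam)).div ((hexp.const_mul lam).const_sub mu) h).congr_deriv ?_
  field_simp
  ring

lemma hasDerivAt_pTrans {lam mu t : ℝ} (nu : ℝ) (i j : ℕ) (hlam : 0 < lam) (hlm : lam < mu)
    (ht : 0 ≤ t) :
    HasDerivAt (pTrans lam mu nu i j)
      ((lam * ((j : ℝ) - 1) + nu) * (if j = 0 then 0 else pTrans lam mu nu i (j - 1) t)
        + mu * ((j : ℝ) + 1) * pTrans lam mu nu i (j + 1) t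
        - ((lam + mu) * (j : ℝ) + nu) * pTrans lam mu nu i j t) t := by
  have hq : HasDerivAt (qfun lam mu)
      (lam * qfun lam mu t * (mu / lam * (1 - qfun lam mu t) - 1)) t :=
    (hasDerivAt_qfun (qfun_denom_pos hlam.le hlm ht).ne').congr_deriv (by field_simp; ring)
  have h := hq.rpow_mul_eval_one_sub (mu / lam) (nu / lam) (qfun_pos hlam.le hlm ht).ne'
    (transPoly (mu / lam) (nu / lam) i j)
  rw [kolmogorovOp_transPoly] at h
  have hprev : qfun lam mu t ^ (nu / lam) *
      (transPoly (mu / lam) (nu / lam) i (j - 1)).eval (1 - qfun lam mu t) =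
      if j = 0 then 0 else pTrans lam mu nu i (j - 1) t := by
    rcases j with _ | j
    · simp [transPoly_of_neg]
    · simp [pTrans_eq_eval]
  rw [show pTrans lam mu nu i j = _ from funext (pTrans_eq_eval lam mu nu i j), ← hprev]
  refine h.congr_deriv ?_
  simp only [eval_add, eval_sub, eval_mul, eval_C, pTrans_eq_eval]
  push_cast
  field_simp

lemma pTrans_at_zero {lam mu : ℝ} (nu : ℝ) (i j : ℕ) (h : lam ≠ mu) :
    pTrans lam mu nu i j 0 = if j = i then 1 else 0 := by
  rw [pTrans_eq_eval, qfun_zero h, one_rpow, one_mul, sub_self, eval_zero_transPoly]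
  simp only [Nat.cast_inj]

theorem stmt_3_general (lam mu nu : ℝ) (i : ℕ)
    (hlam : 0 < lam) (hlm : lam < mu) :
    (∀ j : ℕ, ∀ t ∈ Set.Ioi (0 : ℝ),
      DifferentiableAt ℝ (fun τ => pTrans lam mu nu i j τ) t) ∧
    (∀ t ∈ Set.Ioi (0 : ℝ),
      deriv (fun τ => pTrans lam mu nu i 0 τ) t
        = mu * pTrans lam mu nu i 1 t - nu * pTrans lam mu nu i 0 t) ∧
    (∀ j : ℕ, 1 ≤ j → ∀ t ∈ Set.Ioi (0 : ℝ),
      deriv (fun τ => pTrans lam mu nu i j τ) t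
        = (lam * ((j : ℝ) - 1) + nu) * pTrans lam mu nu i (j - 1) t
          + mu * ((j : ℝ) + 1) * pTrans lam mu nu i (j + 1) t
          - ((lam + mu) * (j : ℝ) + nu) * pTrans lam mu nu i j t) ∧
    pTrans lam mu nu i i 0 = 1 ∧
    (∀ j : ℕ, j ≠ i → pTrans lam mu nu i j 0 = 0) := by
  have hderiv := fun j t (ht : t ∈ Set.Ioi (0 : ℝ)) =>
    hasDerivAt_pTrans nu i j hlam hlm (le_of_lt ht)
  refine ⟨fun j t ht => (hderiv j t ht).differentiableAt, fun t ht => ?_,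
    fun j hj t ht => ?_, ?_, fun j hj => ?_⟩
  · rw [(hderiv 0 t ht).deriv]
    norm_num
  · rw [(hderiv j t ht).deriv, if_neg (by omega)]
  · rw [pTrans_at_zero nu i i hlm.ne, if_pos rfl]
  · rw [pTrans_at_zero nu i j hlm.ne, if_neg hj]

/-- The transition probabilities `p_{i,j}` are differentiable in `t` on `(0,∞)` and satisfy
the forward Kolmogorov system, together with the initial conditions
`p_{i,i}(0) = 1` and `p_{i,j}(0) = 0` for `j ≠ i`. -/
theorem stmt_3 (lam mu nu : ℝ) (i : ℕ)
    (hlam : 0 < lam) (hlm : lam < mu) (hnu : 0 < nu) :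
    (∀ j : ℕ, ∀ t ∈ Set.Ioi (0 : ℝ),
      DifferentiableAt ℝ (fun τ => pTrans lam mu nu i j τ) t) ∧
    (∀ t ∈ Set.Ioi (0 : ℝ),
      deriv (fun τ => pTrans lam mu nu i 0 τ) t
        = mu * pTrans lam mu nu i 1 t - nu * pTrans lam mu nu i 0 t) ∧
    (∀ j : ℕ, 1 ≤ j → ∀ t ∈ Set.Ioi (0 : ℝ),
      deriv (fun τ => pTrans lam mu nu i j τ) t
        = (lam * ((j : ℝ) - 1) + nu) * pTrans lam mu nu i (j - 1) t
          + mu * ((j : ℝ) + 1) * pTrans lam mu nu i (j + 1) t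
          - ((lam + mu) * (j : ℝ) + nu) * pTrans lam mu nu i j t) ∧
    pTrans lam mu nu i i 0 = 1 ∧
    (∀ j : ℕ, j ≠ i → pTrans lam mu nu i j 0 = 0) :=
  stmt_3_general lam mu nu i hlam hlm
end

section
/- Let 0 < λ < μ and ν > 0 be real numbers and set r = ν/λ. Define for each natural number i: π_i = binom(r+i−1, i) · (λ/μ)^i · (1 − λ/μ)^r, where binom(x,k) = (∏_{m=0}^{k−1}(x−m))/k! is the generalized binomial coefficient (so binom(r+i−1, i) = r(r+1)⋯(r+i−1)/i!) and (1−λ/μ)^r is the real power of a positive base. Then: (i) π_i > 0 for all i; (ii) the family (π_i) sums to 1 (HasSum π 1); and (iii) the detailed balance equations π_i·(λi + ν) = μ·(i+1)·π_{i+1} hold for all natural numbers i. -/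
/-!
Positivity holds because every factor `r + i - 1 - m` (`m < i`) of `binom(r+i-1, i)` is at least
`r > 0`. Detailed balance is the ratio `π_{i+1} / π_i = (r+i)/(i+1) · λ/μ` together with
`λ r = ν`. The normalisation is the negative binomial series
`∑ binom(r+n-1, n) xⁿ = (1 - x)^(-r)` at `x = λ/μ < 1`, the power series of `1 / (1 - x)^r`,
whose coefficients `Ring.choose (r+n-1) n` agree with `binom(r+n-1, n)`.
-/

open Real

theorem genBinom_eq_ringChoose (x : ℝ) (k : ℕ) : genBinom x k = Ring.choose x k := by
  rw [genBinom, Ring.choose_eq_smul, ← Polynomial.aeval_eq_smeval, Polynomial.aeval_def,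
    ← Polynomial.eval_map, descPochhammer_map, descPochhammer_eval_eq_prod_range, smul_eq_mul,
    div_eq_inv_mul]

theorem genBinom_add_sub_one_pos {r : ℝ} (hr : 0 < r) (i : ℕ) :
    0 < genBinom (r + i - 1) i := by
  refine div_pos (Finset.prod_pos fun m hm => ?_) (by positivity)
  have : (m : ℝ) + 1 ≤ i := by exact_mod_cast Finset.mem_range.1 hm
  linarith

theorem genBinom_add_sub_one_succ (r : ℝ) (i : ℕ) :
    genBinom (r + (i + 1 : ℕ) - 1) (i + 1) * (i + 1) = (r + i) * genBinom (r + i - 1) i := by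
  rw [genBinom, genBinom, Finset.prod_range_succ', Nat.factorial_succ]
  have hshift (m : ℕ) : r + ((i : ℝ) + 1) - 1 - ((m : ℝ) + 1) = r + i - 1 - m := by ring
  push_cast
  simp only [hshift]
  field_simp
  ring

theorem hasSum_genBinom_mul_pow (a : ℝ) {x : ℝ} (hx : |x| < 1) :
    HasSum (fun n : ℕ => genBinom (a + n - 1) n * x ^ n) ((1 - x) ^ (-a)) := by
  have h := (one_div_one_sub_rpow_hasFPowerSeriesOnBall_zero a).hasSum
    (y := x) (by simpa [enorm_eq_nnnorm, ← NNReal.coe_lt_coe] using hx)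
  simp only [FormalMultilinearSeries.ofScalars_apply_eq, zero_add, smul_eq_mul] at h
  rw [rpow_neg (by linarith [abs_lt.1 hx]), ← one_div]
  simpa [genBinom_eq_ringChoose] using h

/-- The claimed invariant distribution `π_i = binom(r+i-1, i) (λ/μ)^i (1-λ/μ)^r` (with
`r = ν/λ`) of the linear birth-death process with immigration in the positive recurrent
regime: it is positive, sums to `1`, and satisfies the detailed balance equations
`π_i (λi + ν) = μ (i+1) π_{i+1}`. -/
theorem stmt_17 (lam mu nu : ℝ) (hlam : 0 < lam) (hlm : lam < mu) (hnu : 0 < nu)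
    (r : ℝ) (hr : r = nu / lam) (pi : ℕ → ℝ)
    (hpi : ∀ i : ℕ, pi i = genBinom (r + (i : ℝ) - 1) i * (lam / mu) ^ i * (1 - lam / mu) ^ r) :
    (∀ i : ℕ, 0 < pi i) ∧
    HasSum pi 1 ∧
    (∀ i : ℕ, pi i * (lam * (i : ℝ) + nu) = mu * ((i : ℝ) + 1) * pi (i + 1)) := by
  have hmu : 0 < mu := hlam.trans hlm
  have hx0 : 0 < lam / mu := div_pos hlam hmu
  have hx1 : lam / mu < 1 := (div_lt_one hmu).2 hlm
  have hb : 0 < 1 - lam / mu := by linarith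
  have hc : 0 < (1 - lam / mu) ^ r := rpow_pos_of_pos hb r
  have hr0 : 0 < r := hr ▸ div_pos hnu hlam
  refine ⟨fun i => ?_, ?_, fun i => ?_⟩
  · rw [hpi]
    have := genBinom_add_sub_one_pos hr0 i
    positivity
  · have h := (hasSum_genBinom_mul_pow r (abs_lt.2 ⟨by linarith, hx1⟩)).mul_right
      ((1 - lam / mu) ^ r)
    rwa [rpow_neg hb.le, inv_mul_cancel₀ hc.ne', ← funext hpi] at h
  · have hrec := genBinom_add_sub_one_succ r i
    have hmx : mu * (lam / mu) = lam := mul_div_cancel₀ lam hmu.ne'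
    have hlr : lam * r = nu := by rw [hr, mul_div_cancel₀ nu hlam.ne']
    rw [hpi, hpi, pow_succ]
    linear_combination (-(mu * (lam / mu) ^ i * (1 - lam / mu) ^ r * (lam / mu))) * hrec
      - genBinom (r + i - 1) i * (lam / mu) ^ i * (1 - lam / mu) ^ r * ((r + i) * hmx + hlr)
end
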